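/- arXiv:1703.06640 — 2 statements merged into one kernel-verified Lean document; each statement's English description precedes it below -/
import Mathlib

section
/- If f : X → X is an isometry and Σ_{n=1}^∞ D(f_n, f) < ∞, then for every n, k ∈ ℕ, D(ω^n_{n+k}, f^k) ≤ Σ_{i=1}^{k} D(f_{n+i}, f); consequently the family {ω^n_{n+k} : k ∈ ℕ} converges collectively to {f^k : k ∈ ℕ} (for every ε > 0 there exists n₀ with D(ω^n_{n+k}, f^k) < ε for all k ∈ ℕ and n ≥ n₀). No commutativity assumption is needed. -/
open Filter Metric Set

noncomputable def supD {X : Type*} [MetricSpace X] (g h : X → X) : ℝ :=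
  ⨆ x, dist (g x) (h x)

def omega {X : Type*} (fn : ℕ → X → X) : ℕ → X → X
  | 0 => id
  | k + 1 => fn (k + 1) ∘ omega fn k

def omegaSeg {X : Type*} (fn : ℕ → X → X) (n : ℕ) : ℕ → X → X
  | 0 => id
  | k + 1 => fn (n + k + 1) ∘ omegaSeg fn n k

/-!
Since `f` is 1-Lipschitz, replacing the outermost map `f_{n+k+1}` of `ω^n_{n+k+1}` by `f`
costs at most `D(f_{n+k+1}, f)`, and comparing the remaining `f ∘ ω^n_{n+k}` with `f ∘ f^k`
costs at most `D(ω^n_{n+k}, f^k)`; induction on `k` gives the partial-sum bound. The uniform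
convergence in `k` follows because every such partial sum is dominated by a tail of the
convergent series `∑ D(f_m, f)`.
-/

section SupDist

variable {X : Type*} [MetricSpace X]

lemma supD_nonneg (g h : X → X) : 0 ≤ supD g h :=
  Real.iSup_nonneg fun _ => dist_nonneg

lemma supD_le {g h : X → X} {C : ℝ} (hC0 : 0 ≤ C) (hC : ∀ x, dist (g x) (h x) ≤ C) :
    supD g h ≤ C :=
  Real.iSup_le hC hC0

lemma dist_le_supD [BoundedSpace X] (g h : X → X) (x : X) : dist (g x) (h x) ≤ supD g h :=
  le_ciSup ⟨diam univ, forall_mem_range.2 fun y =>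
    dist_le_diam_of_mem (Bornology.isBounded_univ.2 ‹_›) (mem_univ (g y)) (mem_univ (h y))⟩ x

lemma supD_comp_le [BoundedSpace X] {f : X → X} (hf : LipschitzWith 1 f) (g u v : X → X) :
    supD (g ∘ u) (f ∘ v) ≤ supD g f + supD u v :=
  supD_le (add_nonneg (supD_nonneg _ _) (supD_nonneg _ _)) fun x =>
    calc dist (g (u x)) (f (v x))
        ≤ dist (g (u x)) (f (u x)) + dist (f (u x)) (f (v x)) := dist_triangle _ _ _
      _ ≤ supD g f + supD u v :=
          add_le_add (dist_le_supD g f (u x))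
            (by simpa using hf.dist_le_mul_of_le (dist_le_supD u v x))

lemma supD_omegaSeg_iterate_le [BoundedSpace X] {f : X → X} (hf : LipschitzWith 1 f)
    (fn : ℕ → X → X) (n k : ℕ) :
    supD (omegaSeg fn n k) (f^[k]) ≤ ∑ i ∈ Finset.range k, supD (fn (n + i + 1)) f := by
  induction k with
  | zero => exact supD_le le_rfl fun x => by simp [omegaSeg]
  | succ k ih =>
    rw [Finset.sum_range_succ, Function.iterate_succ']
    calc supD (omegaSeg fn n (k + 1)) (f ∘ f^[k])
        ≤ supD (fn (n + k + 1)) f + supD (omegaSeg fn n k) (f^[k]) := supD_comp_le hf _ _ _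
      _ ≤ _ := by linarith

end SupDist

lemma Summable.eventually_forall_sum_range_add_lt {a : ℕ → ℝ} (ha : ∀ n, 0 ≤ a n)
    (hs : Summable a) {ε : ℝ} (hε : 0 < ε) :
    ∀ᶠ n in atTop, ∀ k, ∑ i ∈ Finset.range k, a (n + i) < ε := by
  filter_upwards [(tendsto_sum_nat_add a).eventually (gt_mem_nhds hε)] with n hn k
  calc ∑ i ∈ Finset.range k, a (n + i)
      ≤ ∑' i, a (i + n) := by
        simpa only [add_comm] using
          ((summable_nat_add_iff n).2 hs).sum_le_tsum (Finset.range k) fun i _ => ha _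
    _ < ε := hn

theorem stmt9_general {X : Type*} [MetricSpace X] [CompactSpace X]
    (f : X → X) (fn : ℕ → X → X)
    (hiso : ∀ x y : X, dist (f x) (f y) = dist x y)
    (hsum : Summable fun n => supD (fn (n + 1)) f) :
    (∀ n k : ℕ, supD (omegaSeg fn n k) (f^[k]) ≤
        ∑ i ∈ Finset.range k, supD (fn (n + i + 1)) f) ∧
    (∀ ε > 0, ∃ n₀ : ℕ, ∀ n ≥ n₀, ∀ k : ℕ, supD (omegaSeg fn n k) (f^[k]) < ε) := by
  have hf : LipschitzWith 1 f := (Isometry.of_dist_eq hiso).lipschitz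
  refine ⟨supD_omegaSeg_iterate_le hf fn, fun ε hε => ?_⟩
  obtain ⟨n₀, hn₀⟩ := eventually_atTop.1
    (hsum.eventually_forall_sum_range_add_lt (fun _ => supD_nonneg _ _) hε)
  exact ⟨n₀, fun n hn k => (supD_omegaSeg_iterate_le hf fn n k).trans_lt (hn₀ n hn k)⟩

theorem stmt9 {X : Type*} [MetricSpace X] [CompactSpace X] [Nonempty X]
    (f : X → X) (fn : ℕ → X → X)
    (hfn : ∀ n, Continuous (fn n))
    (hiso : ∀ x y : X, dist (f x) (f y) = dist x y)
    (hsum : Summable fun n => supD (fn (n + 1)) f) :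
    (∀ n k : ℕ, supD (omegaSeg fn n k) (f^[k]) ≤
        ∑ i ∈ Finset.range k, supD (fn (n + i + 1)) f) ∧
    (∀ ε > 0, ∃ n₀ : ℕ, ∀ n ≥ n₀, ∀ k : ℕ, supD (omegaSeg fn n k) (f^[k]) < ε) :=
  stmt9_general f fn hiso hsum
end

section
/- If (f_n) converges uniformly to f and the set of periodic points of the non-autonomous system (X, F) is dense in X, then the set of periodic points of f is dense in X. -/
open Filter Metric Set

lemma omega_add {X : Type*} (fn : ℕ → X → X) (n k : ℕ) :
    omega fn (n + k) = omegaSeg fn n k ∘ omega fn n := by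
  induction k with
  | zero => rfl
  | succ k ih =>
      show omega fn (n + k + 1) = _
      rw [show omega fn (n + k + 1) = fn (n + k + 1) ∘ omega fn (n + k) from rfl, ih]
      rfl

lemma seg_unif {X : Type*} [MetricSpace X] [CompactSpace X]
    (f : X → X) (fn : ℕ → X → X) (hf : Continuous f)
    (huc : TendstoUniformly fn f atTop) (k : ℕ) :
    ∀ ε > (0 : ℝ), ∃ N : ℕ, ∀ n ≥ N, ∀ x : X,
      dist (omegaSeg fn n k x) (f^[k] x) < ε := by
  induction k with
  | zero =>
      intro ε hε
      exact ⟨0, fun n _ x => by simpa [omegaSeg] using hε⟩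
  | succ k ih =>
      intro ε hε
      obtain ⟨δ, hδ, hδ'⟩ := Metric.uniformContinuous_iff.mp (CompactSpace.uniformContinuous_of_continuous hf) (ε / 2)
        (by linarith)
      obtain ⟨N1, hN1⟩ := ih δ hδ
      obtain ⟨N2, hN2⟩ := (Metric.tendstoUniformly_iff.mp huc (ε / 2) (by linarith)).exists_forall_of_atTop
      refine ⟨max N1 N2, fun n hn x => ?_⟩
      have h1 : dist (fn (n + k + 1) (omegaSeg fn n k x)) (f (omegaSeg fn n k x)) < ε / 2 := by
        have := hN2 (n + k + 1) (le_trans (le_trans (le_max_right N1 N2) hn) (by omega))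
          (omegaSeg fn n k x)
        simpa [dist_comm] using this
      have h2 : dist (f (omegaSeg fn n k x)) (f (f^[k] x)) < ε / 2 :=
        hδ' (hN1 n (le_trans (le_max_left N1 N2) hn) x)
      calc dist (omegaSeg fn n (k + 1) x) (f^[k + 1] x)
          = dist (fn (n + k + 1) (omegaSeg fn n k x)) (f (f^[k] x)) := by
            rw [Function.iterate_succ_apply']; rfl
        _ ≤ _ + _ := dist_triangle _ (f (omegaSeg fn n k x)) _
        _ < ε / 2 + ε / 2 := by linarith
        _ = ε := by ring

theorem stmt14 {X : Type*} [MetricSpace X] [CompactSpace X] [Nonempty X]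
    (f : X → X) (fn : ℕ → X → X)
    (hf : Continuous f) (hfn : ∀ n, Continuous (fn n))
    (huc : TendstoUniformly fn f atTop)
    (hdense : Dense {x : X | ∃ k : ℕ, 1 ≤ k ∧ ∀ n : ℕ, omega fn (n * k) x = x}) :
    Dense {x : X | ∃ k : ℕ, 1 ≤ k ∧ f^[k] x = x} := by
  refine hdense.mono fun x hx => ?_
  obtain ⟨k, hk1, hk⟩ := hx
  refine ⟨k, hk1, ?_⟩
  rw [← dist_eq_zero]
  by_contra hne
  have hpos : 0 < dist (f^[k] x) x := lt_of_le_of_ne dist_nonneg (Ne.symm hne)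
  obtain ⟨N, hN⟩ := seg_unif f fn hf huc k (dist (f^[k] x) x) hpos
  have hNk : N ≤ N * k := Nat.le_mul_of_pos_right N (by omega)
  have hx1 : omega fn (N * k) x = x := hk N
  have hx2 : omega fn (N * k + k) x = x := by
    have := hk (N + 1); rwa [add_mul, one_mul] at this
  have := hN (N * k) hNk x
  rw [show omega fn (N * k + k) x = omegaSeg fn (N * k) k (omega fn (N * k) x) from
    congrFun (omega_add fn (N * k) k) x, hx1] at hx2
  rw [hx2, dist_comm] at this
  exact lt_irrefl _ this
end
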